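/- arXiv:2303.10392 — 2 statements merged into one kernel-verified Lean document; each statement's English description precedes it below -/
import Mathlib

section
/- If B = [b_{ij}] is an n×n complex matrix with all entries b_{ij} ≥ 0, then w(B) = r((B + B*)/2), where r denotes the spectral radius; in particular w(B) = w((B+B*)/2). -/
/-- The numerical radius of a bounded linear operator on a complex Hilbert space:
`w(T) = sup {|⟨Tx, x⟩| : ‖x‖ = 1}`. -/
noncomputable def numRad {H : Type*} [NormedAddCommGroup H] [InnerProductSpace ℂ H]
    (T : H →L[ℂ] H) : ℝ :=
  sSup {r : ℝ | ∃ x : H, ‖x‖ = 1 ∧ r = ‖(inner ℂ (T x) x : ℂ)‖}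

/-- The absolute value `|T| = (T*T)^{1/2}` of a bounded operator. -/
noncomputable def absOp {H : Type*} [NormedAddCommGroup H] [InnerProductSpace ℂ H]
    [CompleteSpace H] (T : H →L[ℂ] H) : H →L[ℂ] H :=
  CFC.sqrt (ContinuousLinearMap.adjoint T * T)

/-- The numerical radius of a complex `n × n` matrix. -/
noncomputable def numRadMat {n : ℕ} (M : Matrix (Fin n) (Fin n) ℂ) : ℝ :=
  numRad (Matrix.toEuclideanCLM (𝕜 := ℂ) M)

/-! For a unit vector `x`, the nonnegativity of the entries of `B` gives
`|⟪B x, x⟫| ≤ ⟪B |x|, |x|⟫`, where `|x|` is the entrywise modulus. The right-hand side is real, so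
it equals `⟪A |x|, |x|⟫` for `A = (B + B*)/2`, since `⟪A y, y⟫ = Re ⟪B y, y⟫` for every `y`.
Hence `w(B) ≤ w(A)`, and `w(A) ≤ w(B)` by the same identity. Finally, for the self-adjoint `A`,
polarization (the Rayleigh-quotient formula for `‖A‖`) gives `w(A) = ‖A‖ = r(A)`. -/

open scoped ComplexOrder

local notation "⟪" x ", " y "⟫" => inner ℂ x y

section NumRad

open ContinuousLinearMap

variable {H : Type*} [NormedAddCommGroup H] [InnerProductSpace ℂ H] (T : H →L[ℂ] H)

lemma norm_inner_apply_self_le_opNorm {x : H} (hx : ‖x‖ = 1) : ‖⟪T x, x⟫‖ ≤ ‖T‖ := by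
  grw [norm_inner_le_norm, le_opNorm, hx, mul_one, mul_one]

lemma numRad_nonneg : 0 ≤ numRad T :=
  Real.sSup_nonneg fun _ ⟨_, _, hr⟩ ↦ hr ▸ norm_nonneg _

lemma norm_inner_apply_self_le_numRad {x : H} (hx : ‖x‖ = 1) : ‖⟪T x, x⟫‖ ≤ numRad T :=
  le_csSup ⟨‖T‖, fun _ ⟨_, hy, hr⟩ ↦ hr ▸ norm_inner_apply_self_le_opNorm T hy⟩ ⟨x, hx, rfl⟩

variable {T} in
lemma numRad_le_of_forall {c : ℝ} (hc : 0 ≤ c) (h : ∀ x : H, ‖x‖ = 1 → ‖⟪T x, x⟫‖ ≤ c) :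
    numRad T ≤ c :=
  Real.sSup_le (fun _ ⟨x, hx, hr⟩ ↦ hr ▸ h x hx) hc

lemma numRad_le_opNorm : numRad T ≤ ‖T‖ :=
  numRad_le_of_forall (norm_nonneg T) fun _ ↦ norm_inner_apply_self_le_opNorm T

lemma abs_rayleighQuotient_le_numRad (x : H) : |T.rayleighQuotient x| ≤ numRad T := by
  rcases eq_or_ne x 0 with rfl | hx
  · simpa using numRad_nonneg T
  have hu : ‖(‖x‖⁻¹ : ℂ) • x‖ = 1 := by simp [norm_smul, hx]
  rw [← T.rayleigh_smul x (c := (‖x‖⁻¹ : ℂ)) (by simpa using hx), rayleighQuotient,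
    reApplyInnerSelf_apply, hu, one_pow, div_one]
  exact (RCLike.abs_re_le_norm _).trans (norm_inner_apply_self_le_numRad T hu)

variable {T} in
lemma numRad_eq_opNorm_of_isSymmetric (hT : (T : H →ₗ[ℂ] H).IsSymmetric) : numRad T = ‖T‖ :=
  (numRad_le_opNorm T).antisymm <| (T.norm_eq_iSup_rayleighQuotient hT).trans_le <|
    ciSup_le (abs_rayleighQuotient_le_numRad T)

lemma inner_half_smul_add_star_apply_self [CompleteSpace H] (x : H) :
    ⟪((1 / 2 : ℂ) • (T + star T)) x, x⟫ = (⟪T x, x⟫.re : ℂ) := by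
  rw [smul_apply, add_apply, inner_smul_left, inner_add_left, star_eq_adjoint, adjoint_inner_left,
    ← inner_conj_symm x, Complex.add_conj, map_div₀, map_one, map_ofNat]
  push_cast
  ring

lemma numRad_half_smul_add_star_le [CompleteSpace H] :
    numRad ((1 / 2 : ℂ) • (T + star T)) ≤ numRad T :=
  numRad_le_of_forall (numRad_nonneg T) fun x hx ↦ by
    rw [inner_half_smul_add_star_apply_self, Complex.norm_real, Real.norm_eq_abs]
    exact (Complex.abs_re_le_norm _).trans (norm_inner_apply_self_le_numRad T hx)

end NumRad

section Matrix

variable {ι : Type*} [Fintype ι] [DecidableEq ι]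

lemma inner_toEuclideanCLM_apply (B : Matrix ι ι ℂ) (x y : EuclideanSpace ℂ ι) :
    ⟪x, Matrix.toEuclideanCLM (𝕜 := ℂ) B y⟫ = ∑ i, ∑ j, star (x i) * B i j * y j := by
  simp only [EuclideanSpace.inner_eq_star_dotProduct, Matrix.ofLp_toEuclideanCLM, dotProduct,
    Matrix.mulVec, Finset.sum_mul, Pi.star_apply]
  exact Finset.sum_congr rfl fun _ _ ↦ Finset.sum_congr rfl fun _ _ ↦ by ring

lemma norm_inner_toEuclideanCLM_self_le {B : Matrix ι ι ℂ} (hB : ∀ i j, 0 ≤ B i j)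
    (x : EuclideanSpace ℂ ι) :
    ‖⟪Matrix.toEuclideanCLM (𝕜 := ℂ) B x, x⟫‖ ≤
      (⟪Matrix.toEuclideanCLM (𝕜 := ℂ) B (WithLp.toLp 2 fun i ↦ (‖x i‖ : ℂ)),
        WithLp.toLp 2 fun i ↦ (‖x i‖ : ℂ)⟫).re := by
  set y : EuclideanSpace ℂ ι := WithLp.toLp 2 fun i ↦ (‖x i‖ : ℂ)
  have hterm : ∀ i j, (‖star (x i) * B i j * x j‖ : ℂ) = star (y i) * B i j * y j := by
    intro i j
    simp [y, Complex.norm_of_nonneg' (hB i j)]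
  calc ‖⟪Matrix.toEuclideanCLM (𝕜 := ℂ) B x, x⟫‖
      = ‖∑ i, ∑ j, star (x i) * B i j * x j‖ := by
        rw [norm_inner_symm, inner_toEuclideanCLM_apply]
    _ ≤ ∑ i, ∑ j, ‖star (x i) * B i j * x j‖ :=
        (norm_sum_le _ _).trans (Finset.sum_le_sum fun i _ ↦ norm_sum_le _ _)
    _ = (⟪Matrix.toEuclideanCLM (𝕜 := ℂ) B y, y⟫).re := by
        rw [← inner_conj_symm, Complex.conj_re, inner_toEuclideanCLM_apply]
        simp_rw [← hterm]
        norm_cast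

lemma numRad_toEuclideanCLM_eq_of_nonneg {B : Matrix ι ι ℂ} (hB : ∀ i j, 0 ≤ B i j) :
    numRad (Matrix.toEuclideanCLM (𝕜 := ℂ) B) =
      numRad ((1 / 2 : ℂ) • (Matrix.toEuclideanCLM (𝕜 := ℂ) B +
        star (Matrix.toEuclideanCLM (𝕜 := ℂ) B))) := by
  refine le_antisymm (numRad_le_of_forall (numRad_nonneg _) fun x hx ↦ ?_)
    (numRad_half_smul_add_star_le _)
  set y : EuclideanSpace ℂ ι := WithLp.toLp 2 fun i ↦ (‖x i‖ : ℂ)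
  have hy : ‖y‖ = 1 := by simpa [y, EuclideanSpace.norm_eq] using hx
  calc ‖⟪Matrix.toEuclideanCLM (𝕜 := ℂ) B x, x⟫‖
      ≤ (⟪Matrix.toEuclideanCLM (𝕜 := ℂ) B y, y⟫).re := norm_inner_toEuclideanCLM_self_le hB x
    _ ≤ ‖⟪((1 / 2 : ℂ) • (Matrix.toEuclideanCLM (𝕜 := ℂ) B +
          star (Matrix.toEuclideanCLM (𝕜 := ℂ) B))) y, y⟫‖ := by
        rw [inner_half_smul_add_star_apply_self, Complex.norm_real]
        exact Real.le_norm_self _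
    _ ≤ _ := norm_inner_apply_self_le_numRad _ hy

end Matrix

open ContinuousLinearMap
theorem stmt7 {n : ℕ} (B : Matrix (Fin n) (Fin n) ℂ)
    (hB : ∀ i j, ∃ r : ℝ, 0 ≤ r ∧ B i j = (r : ℂ)) :
    numRadMat B =
      (spectralRadius ℂ (Matrix.toEuclideanCLM (𝕜 := ℂ)
        ((1 / 2 : ℂ) • (B + star B)))).toReal ∧
    numRadMat B = numRadMat ((1 / 2 : ℂ) • (B + star B)) := by
  have hB_nonneg : ∀ i j, (0 : ℂ) ≤ B i j := fun i j ↦ by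
    obtain ⟨r, hr, hBr⟩ := hB i j
    exact hBr ▸ Complex.zero_le_real.2 hr
  set T := Matrix.toEuclideanCLM (𝕜 := ℂ) B
  have hA : Matrix.toEuclideanCLM (𝕜 := ℂ) ((1 / 2 : ℂ) • (B + star B)) =
      (1 / 2 : ℂ) • (T + star T) := by
    rw [map_smul, map_add, map_star]
  have hA_selfAdjoint : IsSelfAdjoint ((1 / 2 : ℂ) • (T + star T)) :=
    .smul (Complex.conj_eq_iff_im.2 (by norm_num)) (.add_star_self T)
  have hw : numRadMat B = numRadMat ((1 / 2 : ℂ) • (B + star B)) := by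
    rw [numRadMat, numRadMat, hA]
    exact numRad_toEuclideanCLM_eq_of_nonneg hB_nonneg
  refine ⟨?_, hw⟩
  rw [hw, numRadMat, hA, hA_selfAdjoint.spectralRadius_eq_nnnorm, ENNReal.coe_toReal, coe_nnnorm]
  exact numRad_eq_opNorm_of_isSymmetric hA_selfAdjoint.isSymmetric
end

section
/- For bounded linear operators B, C on a complex Hilbert space H, the off-diagonal operator matrix [[0, B],[C, 0]] on H ⊕ H satisfies w([[0,B],[C,0]]) ≤ (1/2) ‖|B| + |C*|‖^{1/2} · ‖|C| + |B*|‖^{1/2}. -/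
/-!
Kato's mixed Schwarz inequality `‖⟪T x, y⟫‖² ≤ ⟪|T| x, x⟫ ⟪|T*| y, y⟫` is obtained without a polar
decomposition: for `ε > 0` put `S = (|T| + ε)^{1/2}`, which is invertible, so that
`⟪T x, y⟫ = ⟪S x, S⁻¹ T* y⟫`. The first factor has square `⟪|T| x, x⟫ + ε ‖x‖²`, and the second has
square `⟪T (|T| + ε)⁻¹ T* y, y⟫ ≤ ⟪|T*| y, y⟫`, because `T f(T*T) = f(TT*) T` for continuous `f`
(true for polynomials, hence for their uniform limits). Let `ε → 0`.

For a unit vector `x = (x₀, x₁)`, `⟪T x, x⟫ = ⟪B x₁, x₀⟫ + ⟪C x₀, x₁⟫`. The mixed Schwarz inequality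
on both terms and Cauchy–Schwarz in `ℝ²` bound this by
`⟪(|B| + |C*|) x₁, x₁⟫^{1/2} ⟪(|C| + |B*|) x₀, x₀⟫^{1/2}
  ≤ ‖|B| + |C*|‖^{1/2} ‖|C| + |B*|‖^{1/2} ‖x₀‖ ‖x₁‖`, and `‖x₀‖ ‖x₁‖ ≤ 1/2`.
-/

open Polynomial Filter Topology ContinuousLinearMap RCLike

lemma SemiconjBy.aeval_right {R A : Type*} [CommSemiring R] [Semiring A] [Algebra R A]
    {a b x : A} (h : SemiconjBy x a b) (q : R[X]) : SemiconjBy x (aeval a q) (aeval b q) := by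
  induction q using Polynomial.induction_on' with
  | add p q hp hq => simpa only [map_add] using hp.add_right hq
  | monomial n r =>
    simpa only [aeval_monomial, ← Algebra.smul_def] using (h.pow_right n).smul_right r

lemma SemiconjBy.cfc_real_right {A : Type*} [CStarAlgebra A] {a b x : A}
    (h : SemiconjBy x a b) (ha : IsSelfAdjoint a) (hb : IsSelfAdjoint b) {f : ℝ → ℝ}
    (hf : Continuous f) : SemiconjBy x (cfc f a) (cfc f b) := by
  set s := spectrum ℝ a ∪ spectrum ℝ b
  have hs : s ⊆ Set.Icc (sInf s) (sSup s) :=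
    ((spectrum.isCompact a).union (spectrum.isCompact b)).isBounded.subset_Icc_sInf_sSup
  choose q hq using fun n : ℕ => exists_polynomial_near_of_continuousOn (sInf s) (sSup s) f
    hf.continuousOn (1 / (n + 1)) Nat.one_div_pos_of_nat
  have hunif : TendstoUniformlyOn (fun n => (q n).eval) f atTop s := by
    refine Metric.tendstoUniformlyOn_iff.2 fun ε hε => ?_
    filter_upwards [tendsto_one_div_add_atTop_nhds_zero_nat.eventually (gt_mem_nhds hε)]
      with n hn t ht
    rw [Real.dist_eq, abs_sub_comm]
    exact (hq n t (hs ht)).trans hn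
  have hlim : ∀ c : A, spectrum ℝ c ⊆ s → IsSelfAdjoint c →
      Tendsto (fun n => aeval c (q n)) atTop (𝓝 (cfc f c)) := by
    intro c hc hsa
    simp_rw [← cfc_polynomial _ c hsa]
    exact tendsto_cfc_fun (hunif.mono hc) (Eventually.of_forall fun n => (q n).continuousOn)
  exact tendsto_nhds_unique ((hlim a Set.subset_union_left ha).const_mul x)
    (by simpa only [(h.aeval_right (q _)).eq] using (hlim b Set.subset_union_right hb).mul_const x)

lemma Real.sqrt_mul_sqrt_add_sqrt_mul_sqrt_le {a b c d : ℝ} (ha : 0 ≤ a) (hb : 0 ≤ b)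
    (hc : 0 ≤ c) (hd : 0 ≤ d) : √a * √b + √c * √d ≤ √(a + c) * √(b + d) := by
  rw [← Real.sqrt_mul (add_nonneg ha hc)]
  refine Real.le_sqrt_of_sq_le ?_
  nlinarith [Real.sq_sqrt ha, Real.sq_sqrt hb, Real.sq_sqrt hc, Real.sq_sqrt hd,
    sq_nonneg (√a * √d - √b * √c)]

lemma ContinuousLinearMap.re_inner_le_re_inner_of_le {𝕜 E : Type*} [RCLike 𝕜]
    [NormedAddCommGroup E] [InnerProductSpace 𝕜 E] {A B : E →L[𝕜] E} (h : A ≤ B) (x : E) :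
    re (inner 𝕜 (A x) x) ≤ re (inner 𝕜 (B x) x) := by
  simpa [inner_sub_left] using ((le_def A B).1 h).re_inner_nonneg_left x

lemma IsSelfAdjoint.norm_apply_sq {𝕜 E : Type*} [RCLike 𝕜] [NormedAddCommGroup E]
    [InnerProductSpace 𝕜 E] [CompleteSpace E] {S : E →L[𝕜] E} (hS : IsSelfAdjoint S) (z : E) :
    ‖S z‖ ^ 2 = re (inner 𝕜 ((S * S) z) z) := by
  rw [apply_norm_sq_eq_inner_adjoint_left, hS.adjoint_eq]
  rfl

lemma ContinuousLinearMap.sqrt_re_inner_apply_self_le {𝕜 E : Type*} [RCLike 𝕜]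
    [NormedAddCommGroup E] [InnerProductSpace 𝕜 E] (A : E →L[𝕜] E) (x : E) :
    √(re (inner 𝕜 (A x) x)) ≤ √‖A‖ * ‖x‖ := by
  have h : re (inner 𝕜 (A x) x) ≤ ‖A‖ * ‖x‖ ^ 2 :=
    calc re (inner 𝕜 (A x) x) ≤ ‖A x‖ * ‖x‖ := re_inner_le_norm _ _
      _ ≤ ‖A‖ * ‖x‖ * ‖x‖ := by gcongr; exact A.le_opNorm x
      _ = ‖A‖ * ‖x‖ ^ 2 := by ring
  calc √(re (inner 𝕜 (A x) x)) ≤ √(‖A‖ * ‖x‖ ^ 2) := Real.sqrt_le_sqrt h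
    _ = √‖A‖ * ‖x‖ := by rw [Real.sqrt_mul (norm_nonneg A), Real.sqrt_sq (norm_nonneg x)]

lemma numRad_le {E : Type*} [NormedAddCommGroup E] [InnerProductSpace ℂ E] (T : E →L[ℂ] E)
    {c : ℝ} (hc : 0 ≤ c) (h : ∀ x, ‖x‖ = 1 → ‖inner ℂ (T x) x‖ ≤ c) : numRad T ≤ c :=
  Real.sSup_le (by rintro r ⟨x, hx, rfl⟩; exact h x hx) hc

section
variable {H : Type*} [NormedAddCommGroup H] [InnerProductSpace ℂ H] [CompleteSpace H]

lemma absOp_eq_cfc (T : H →L[ℂ] H) : absOp T = cfc Real.sqrt (star T * T) := by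
  rw [absOp, ← star_eq_adjoint, CFC.sqrt_eq_cfc, cfc_nnreal_eq_real _ _ (star_mul_self_nonneg T)]
  exact cfc_congr fun x _ => by rw [Real.sqrt]

lemma absOp_adjoint_eq_cfc (T : H →L[ℂ] H) : absOp (adjoint T) = cfc Real.sqrt (T * star T) := by
  rw [absOp_eq_cfc, ← star_eq_adjoint, star_star]

lemma re_inner_absOp_apply_nonneg (T : H →L[ℂ] H) (x : H) :
    0 ≤ re (inner ℂ (absOp T x) x) := by
  have h : (0 : H →L[ℂ] H) ≤ absOp T := CFC.sqrt_nonneg _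
  exact ((nonneg_iff_isPositive _).1 h).re_inner_nonneg_left x

lemma mul_cfc_inv_sqrt_add_mul_star_le_absOp_adjoint (T : H →L[ℂ] H) {ε : ℝ} (hε : 0 < ε) :
    T * cfc (fun s => (√s + ε)⁻¹) (star T * T) * star T ≤ absOp (adjoint T) := by
  have hpos (s : ℝ) : 0 < √s + ε := by positivity
  have hg : Continuous fun s : ℝ => (√s + ε)⁻¹ :=
    (Real.continuous_sqrt.add continuous_const).inv₀ fun s => (hpos s).ne'
  have hT : SemiconjBy T (star T * T) (T * star T) := (mul_assoc _ _ _).symm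
  have hb : cfc (fun s => (√s + ε)⁻¹ * s) (T * star T) =
      cfc (fun s => (√s + ε)⁻¹) (T * star T) * (T * star T) := by
    rw [cfc_mul _ _ _ hg.continuousOn, cfc_id' ℝ (T * star T)]
  rw [(hT.cfc_real_right (.star_mul_self T) (.mul_star_self T) hg).eq, mul_assoc, ← hb,
    absOp_adjoint_eq_cfc]
  refine cfc_mono fun s hs => ?_
  have hs0 : 0 ≤ s := spectrum_nonneg_of_nonneg (mul_star_self_nonneg T) hs
  rw [inv_mul_le_iff₀ (hpos s)]
  nlinarith [Real.mul_self_sqrt hs0, Real.sqrt_nonneg s]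

lemma norm_cfc_sqrt_sqrt_add_apply_sq (T : H →L[ℂ] H) {ε : ℝ} (hε : 0 ≤ ε) (x : H) :
    ‖cfc (fun s => √(√s + ε)) (star T * T) x‖ ^ 2 = re (inner ℂ (absOp T x) x) + ε * ‖x‖ ^ 2 := by
  have hS : IsSelfAdjoint (cfc (fun s => √(√s + ε)) (star T * T)) := cfc_predicate _ _
  have hSS : cfc (fun s => √(√s + ε)) (star T * T) * cfc (fun s => √(√s + ε)) (star T * T) =
      absOp T + algebraMap ℝ _ ε := by
    rw [← cfc_mul .., absOp_eq_cfc, ← cfc_add_const ε Real.sqrt (star T * T)]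
    exact cfc_congr fun s _ => Real.mul_self_sqrt (by positivity)
  rw [hS.norm_apply_sq, hSS, add_apply, ContinuousLinearMap.algebraMap_apply, inner_add_left,
    map_add, real_smul_eq_coe_smul (K := ℂ), inner_smul_left, conj_ofReal, re_ofReal_mul,
    inner_self_eq_norm_sq]

lemma norm_cfc_inv_sqrt_sqrt_add_adjoint_apply_sq_le (T : H →L[ℂ] H) {ε : ℝ} (hε : 0 < ε)
    (y : H) : ‖cfc (fun s => (√(√s + ε))⁻¹) (star T * T) (adjoint T y)‖ ^ 2 ≤
      re (inner ℂ (absOp (adjoint T) y) y) := by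
  have hpos (s : ℝ) : 0 < √(√s + ε) := by positivity
  have hv : Continuous fun s : ℝ => (√(√s + ε))⁻¹ :=
    (Real.continuous_sqrt.comp (by fun_prop)).inv₀ fun s => (hpos s).ne'
  have hS' : IsSelfAdjoint (cfc (fun s => (√(√s + ε))⁻¹) (star T * T)) := cfc_predicate _ _
  have hS'S' : cfc (fun s => (√(√s + ε))⁻¹) (star T * T) *
      cfc (fun s => (√(√s + ε))⁻¹) (star T * T) = cfc (fun s => (√s + ε)⁻¹) (star T * T) := by
    rw [← cfc_mul _ _ _ hv.continuousOn hv.continuousOn]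
    exact cfc_congr fun s _ => by rw [← mul_inv, Real.mul_self_sqrt (by positivity)]
  rw [hS'.norm_apply_sq, hS'S', adjoint_inner_right]
  exact re_inner_le_re_inner_of_le (mul_cfc_inv_sqrt_add_mul_star_le_absOp_adjoint T hε) y

lemma norm_inner_apply_sq_le_add_mul (T : H →L[ℂ] H) (x y : H) {ε : ℝ} (hε : 0 < ε) :
    ‖inner ℂ (T x) y‖ ^ 2 ≤
      (re (inner ℂ (absOp T x) x) + ε * ‖x‖ ^ 2) * re (inner ℂ (absOp (adjoint T) y) y) := by
  have hpos (s : ℝ) : 0 < √(√s + ε) := by positivity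
  have hu : Continuous fun s : ℝ => √(√s + ε) := by fun_prop
  have hv : Continuous fun s : ℝ => (√(√s + ε))⁻¹ := hu.inv₀ fun s => (hpos s).ne'
  set S := cfc (fun s => √(√s + ε)) (star T * T)
  set S' := cfc (fun s => (√(√s + ε))⁻¹) (star T * T)
  have hSS' : S * S' = 1 := by
    rw [← cfc_mul _ _ _ hu.continuousOn hv.continuousOn, ← cfc_const_one ℝ (star T * T)]
    exact cfc_congr fun s _ => mul_inv_cancel₀ (hpos s).ne'
  have h_inner : inner ℂ (T x) y = inner ℂ (S x) (S' (adjoint T y)) := by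
    have hSS'_apply : S (S' (adjoint T y)) = adjoint T y := by
      simpa using congr($hSS' (adjoint T y))
    have hS : IsSelfAdjoint S := cfc_predicate _ _
    rw [← hS.adjoint_eq, adjoint_inner_left, hSS'_apply, adjoint_inner_right]
  calc ‖inner ℂ (T x) y‖ ^ 2 ≤ ‖S x‖ ^ 2 * ‖S' (adjoint T y)‖ ^ 2 := by
        rw [h_inner, ← mul_pow]; gcongr; exact norm_inner_le_norm _ _
    _ ≤ _ := by
        rw [norm_cfc_sqrt_sqrt_add_apply_sq T hε.le x]
        gcongr
        · exact add_nonneg (re_inner_absOp_apply_nonneg T x) (by positivity)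
        · exact norm_cfc_inv_sqrt_sqrt_add_adjoint_apply_sq_le T hε y

theorem norm_inner_apply_sq_le (T : H →L[ℂ] H) (x y : H) :
    ‖inner ℂ (T x) y‖ ^ 2 ≤
      re (inner ℂ (absOp T x) x) * re (inner ℂ (absOp (adjoint T) y) y) := by
  set p := re (inner ℂ (absOp T x) x)
  set q := re (inner ℂ (absOp (adjoint T) y) y)
  have hcont : Continuous fun ε : ℝ => (p + ε * ‖x‖ ^ 2) * q := by fun_prop
  have hlim : Tendsto (fun ε : ℝ => (p + ε * ‖x‖ ^ 2) * q) (𝓝[>] 0) (𝓝 (p * q)) := by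
    simpa using (hcont.tendsto 0).mono_left nhdsWithin_le_nhds
  exact ge_of_tendsto hlim (eventually_nhdsWithin_of_forall fun ε hε =>
    norm_inner_apply_sq_le_add_mul T x y hε)

theorem norm_inner_apply_le (T : H →L[ℂ] H) (x y : H) :
    ‖inner ℂ (T x) y‖ ≤
      √(re (inner ℂ (absOp T x) x)) * √(re (inner ℂ (absOp (adjoint T) y) y)) := by
  rw [← Real.sqrt_mul (re_inner_absOp_apply_nonneg T x)]
  exact Real.le_sqrt_of_sq_le (norm_inner_apply_sq_le T x y)

lemma norm_inner_apply_self_le_of_offDiag {B C : H →L[ℂ] H}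
    {T : PiLp 2 (fun _ : Fin 2 => H) →L[ℂ] PiLp 2 (fun _ : Fin 2 => H)}
    (hT : ∀ x : PiLp 2 (fun _ : Fin 2 => H), T x 0 = B (x 1) ∧ T x 1 = C (x 0))
    (x : PiLp 2 (fun _ : Fin 2 => H)) :
    ‖inner ℂ (T x) x‖ ≤ √(re (inner ℂ ((absOp B + absOp (adjoint C)) (x 1)) (x 1))) *
      √(re (inner ℂ ((absOp C + absOp (adjoint B)) (x 0)) (x 0))) := by
  have hinner : inner ℂ (T x) x = inner ℂ (B (x 1)) (x 0) + inner ℂ (C (x 0)) (x 1) := by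
    rw [PiLp.inner_apply, Fin.sum_univ_two, (hT x).1, (hT x).2]
  rw [hinner]
  simp only [add_apply, inner_add_left, map_add]
  rw [add_comm (re (inner ℂ (absOp C (x 0)) (x 0)))]
  calc _ ≤ ‖inner ℂ (B (x 1)) (x 0)‖ + ‖inner ℂ (C (x 0)) (x 1)‖ := norm_add_le _ _
    _ ≤ _ := add_le_add (norm_inner_apply_le B _ _) (norm_inner_apply_le C _ _)
    _ ≤ _ := by
      rw [mul_comm √(re (inner ℂ (absOp C (x 0)) (x 0)))]
      exact Real.sqrt_mul_sqrt_add_sqrt_mul_sqrt_le (re_inner_absOp_apply_nonneg _ _)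
        (re_inner_absOp_apply_nonneg _ _) (re_inner_absOp_apply_nonneg _ _)
        (re_inner_absOp_apply_nonneg _ _)

end

open ContinuousLinearMap
theorem stmt11 {H : Type*} [NormedAddCommGroup H] [InnerProductSpace ℂ H] [CompleteSpace H]
    (B C : H →L[ℂ] H)
    (T : PiLp 2 (fun _ : Fin 2 => H) →L[ℂ] PiLp 2 (fun _ : Fin 2 => H))
    (hT : ∀ x : PiLp 2 (fun _ : Fin 2 => H), T x 0 = B (x 1) ∧ T x 1 = C (x 0)) :
    numRad T ≤ (1 / 2) * (Real.sqrt ‖absOp B + absOp (adjoint C)‖ *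
      Real.sqrt ‖absOp C + absOp (adjoint B)‖) := by
  set N₁ := ‖absOp B + absOp (adjoint C)‖
  set N₂ := ‖absOp C + absOp (adjoint B)‖
  refine numRad_le T (by positivity) fun x hx => ?_
  have hx01 : ‖x 0‖ * ‖x 1‖ ≤ 1 / 2 := by
    have hx' : ‖x 0‖ ^ 2 + ‖x 1‖ ^ 2 = 1 := by
      simpa [hx, Fin.sum_univ_two] using (PiLp.norm_sq_eq_of_L2 _ x).symm
    nlinarith [sq_nonneg (‖x 0‖ - ‖x 1‖)]
  calc ‖inner ℂ (T x) x‖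
      ≤ √(re (inner ℂ ((absOp B + absOp (adjoint C)) (x 1)) (x 1))) *
          √(re (inner ℂ ((absOp C + absOp (adjoint B)) (x 0)) (x 0))) :=
        norm_inner_apply_self_le_of_offDiag hT x
    _ ≤ (√N₁ * ‖x 1‖) * (√N₂ * ‖x 0‖) := by gcongr <;> exact sqrt_re_inner_apply_self_le _ _
    _ = (√N₁ * √N₂) * (‖x 0‖ * ‖x 1‖) := by ring
    _ ≤ (√N₁ * √N₂) * (1 / 2) := by gcongr
    _ = 1 / 2 * (√N₁ * √N₂) := mul_comm _ _
end
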